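/- arXiv:1807.09034 — 4 statements merged into one kernel-verified Lean document; each statement's English description precedes it below -/
import Mathlib

section
/- Let G be a finite nonempty connected simple graph and let G' be the graph obtained from G by adding one new vertex adjacent to every vertex of G. Then the connected chromatic number of G' equals χ(G) + 1, i.e., χ_c(G') = χ(G) + 1. -/
open SimpleGraph

/-- One step of the greedy coloring algorithm: color the vertex `w` with the smallest
positive integer not already used on one of its (already colored) neighbours.
Color `0` means "not yet colored". -/
noncomputable def greedyStep {V : Type*} [DecidableEq V] (G : SimpleGraph V)
    (f : V → ℕ) (w : V) : V → ℕ :=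
  Function.update f w (sInf {n : ℕ | 0 < n ∧ ∀ z, G.Adj w z → f z ≠ n})

/-- The coloring obtained by greedily coloring the vertices of the list `l` in order,
starting from the partial coloring `f₀`. -/
noncomputable def greedyFrom {V : Type*} [DecidableEq V] (G : SimpleGraph V)
    (f₀ : V → ℕ) (l : List V) : V → ℕ :=
  l.foldl (greedyStep G) f₀

/-- The greedy coloring of the ordering `l` (all vertices initially uncolored). -/
noncomputable def greedy {V : Type*} [DecidableEq V] (G : SimpleGraph V)
    (l : List V) : V → ℕ :=
  greedyFrom G (fun _ => 0) l

/-- `l` is a connected ordering of the vertices of `G`: it lists every vertex exactly once,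
and every vertex other than the first has a neighbour occurring earlier in the list. -/
def IsConnectedOrder {V : Type*} (G : SimpleGraph V) (l : List V) : Prop :=
  l.Nodup ∧ (∀ w : V, w ∈ l) ∧
    ∀ i : Fin l.length, 0 < (i : ℕ) →
      ∃ j : Fin l.length, (j : ℕ) < (i : ℕ) ∧ G.Adj (l.get i) (l.get j)

/-- `f` is a connected greedy coloring (CGC) of `G`. -/
def IsCGC {V : Type*} [DecidableEq V] (G : SimpleGraph V) (f : V → ℕ) : Prop :=
  ∃ l : List V, IsConnectedOrder G l ∧ f = greedy G l

/-- `f` is an `(x, α)`-connected greedy coloring of `G`: it is obtained from a connected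
ordering starting at `x` by coloring `x` with `α` and then coloring each subsequent
vertex with the smallest positive integer not appearing on its already-colored
neighbours. -/
def IsCGCFrom {V : Type*} [DecidableEq V] (G : SimpleGraph V) (x : V) (α : ℕ)
    (f : V → ℕ) : Prop :=
  ∃ l : List V, IsConnectedOrder G (x :: l) ∧
    f = greedyFrom G (Function.update (fun _ => 0) x α) l

/-- `f` uses exactly `k` colors. -/
def UsesColors {V : Type*} (f : V → ℕ) (k : ℕ) : Prop :=
  ∃ s : Finset ℕ, (∀ w, f w ∈ s) ∧ (∀ c ∈ s, ∃ w, f w = c) ∧ s.card = k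

/-- The connected chromatic number of `G`: the least `k` such that some connected greedy
coloring of `G` only uses colors in `{1, …, k}`. -/
noncomputable def connChrom {V : Type*} [DecidableEq V] (G : SimpleGraph V) : ℕ :=
  sInf {k | ∃ f, IsCGC G f ∧ ∀ w, f w ≤ k}

/-- The cone over `G`: the graph obtained from `G` by adding one new vertex (`none`)
adjacent to every vertex of `G`. -/
def addUniversal {V : Type*} (G : SimpleGraph V) : SimpleGraph (Option V) :=
  SimpleGraph.fromRel (fun a b =>
    (∃ x y, a = some x ∧ b = some y ∧ G.Adj x y) ∨ (a = none ∧ ∃ x, b = some x))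

/-!
Lower bound: in a greedy coloring of the cone the apex gets a color that no other vertex gets,
so deleting that color and renumbering the rest properly colors `G` with one color fewer.

Upper bound: take a proper coloring `C : G.Coloring (Fin χ(G))` and order the cone as the apex
followed by the vertices of `G` by increasing `C`-color; this ordering is connected because the
apex is adjacent to everything. The apex gets color `1`, and since the earlier neighbours of a
vertex `v` have smaller `C`-color, induction shows that `v` gets a color at most
`C v + 2 ≤ χ(G) + 1`.
-/

lemma isConnectedOrder_cons_of_forall_adj {V : Type*} (G : SimpleGraph V) {x : V} {l : List V}
    (hnd : (x :: l).Nodup) (hmem : ∀ w, w ∈ x :: l) (hadj : ∀ y ∈ l, G.Adj y x) :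
    IsConnectedOrder G (x :: l) := by
  refine ⟨hnd, hmem, fun i hi => ⟨⟨0, List.length_pos_of_mem (hmem x)⟩, hi, ?_⟩⟩
  obtain ⟨_ | k, hk⟩ := i
  · exact absurd hi (lt_irrefl 0)
  · exact hadj _ (List.get_mem l ⟨k, Nat.lt_of_succ_lt_succ hk⟩)

section Greedy

variable {V : Type*} [DecidableEq V] (G : SimpleGraph V)

lemma greedyStep_of_ne (f : V → ℕ) {w v : V} (h : v ≠ w) : greedyStep G f w v = f v :=
  Function.update_of_ne h _ _

lemma greedyStep_self_le (f : V → ℕ) (w : V) {m : ℕ} (hm : 0 < m)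
    (h : ∀ z, G.Adj w z → f z ≠ m) : greedyStep G f w w ≤ m := by
  rw [greedyStep, Function.update_self]
  exact Nat.sInf_le ⟨hm, h⟩

lemma greedyStep_self_mem [Fintype V] (f : V → ℕ) (w : V) :
    greedyStep G f w w ∈ {n : ℕ | 0 < n ∧ ∀ z, G.Adj w z → f z ≠ n} := by
  rw [greedyStep, Function.update_self]
  refine Nat.sInf_mem ⟨Finset.univ.sup f + 1, Nat.succ_pos _, fun z _ => ?_⟩
  have := Finset.le_sup (f := f) (Finset.mem_univ z)
  omega

lemma greedyFrom_ne_zero_of_ne_zero [Fintype V] :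
    ∀ (l : List V) {f : V → ℕ} {w : V}, f w ≠ 0 → greedyFrom G f l w ≠ 0
  | [], _, _, h => h
  | v :: l, f, w, h => by
    refine greedyFrom_ne_zero_of_ne_zero l ?_
    by_cases hwv : w = v
    · subst hwv
      exact (greedyStep_self_mem G f w).1.ne'
    · rwa [greedyStep_of_ne G f hwv]

lemma greedyFrom_ne_zero_of_mem [Fintype V] :
    ∀ {l : List V} (f : V → ℕ) {w : V}, w ∈ l → greedyFrom G f l w ≠ 0
  | v :: l, f, w, h => by
    rcases List.mem_cons.mp h with rfl | h
    · exact greedyFrom_ne_zero_of_ne_zero G l (greedyStep_self_mem G f w).1.ne'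
    · exact greedyFrom_ne_zero_of_mem (greedyStep G f v) h

def IsPartialColoring (f : V → ℕ) : Prop :=
  ∀ a b, G.Adj a b → f a ≠ 0 → f b ≠ 0 → f a ≠ f b

lemma IsPartialColoring.greedyStep [Fintype V] {f : V → ℕ} (hf : IsPartialColoring G f)
    (w : V) : IsPartialColoring G (greedyStep G f w) := by
  have hw := (greedyStep_self_mem G f w).2
  intro a b hab ha hb
  by_cases haw : a = w
  · subst haw
    rw [greedyStep_of_ne G f hab.ne.symm]
    exact (hw b hab).symm
  · rw [greedyStep_of_ne G f haw] at ha ⊢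
    by_cases hbw : b = w
    · subst hbw
      exact hw a hab.symm
    · rw [greedyStep_of_ne G f hbw] at hb ⊢
      exact hf a b hab ha hb

lemma IsPartialColoring.greedyFrom [Fintype V] :
    ∀ (l : List V) {f : V → ℕ}, IsPartialColoring G f →
      IsPartialColoring G (greedyFrom G f l)
  | [], _, h => h
  | w :: l, _, h => IsPartialColoring.greedyFrom l (h.greedyStep G w)

lemma greedy_adj_ne [Fintype V] {l : List V} {a b : V} (ha : a ∈ l) (hb : b ∈ l)
    (hab : G.Adj a b) : greedy G l a ≠ greedy G l b :=
  IsPartialColoring.greedyFrom G l (fun _ _ _ h _ => absurd rfl h) a b hab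
    (greedyFrom_ne_zero_of_mem G _ ha) (greedyFrom_ne_zero_of_mem G _ hb)

lemma greedyFrom_le_of_pairwise (c : V → ℕ) :
    ∀ (l : List V) {f : V → ℕ}, (∀ w, f w ≤ c w) →
      (∀ v ∈ l, 0 < c v ∧ ∀ u, G.Adj v u → f u < c v) →
      l.Pairwise (fun a b => G.Adj a b → c a < c b) →
      ∀ w, greedyFrom G f l w ≤ c w
  | [], _, hf, _, _ => hf
  | v :: l, f, hf, hl, hpw => by
    obtain ⟨hvpos, hvnbr⟩ := hl v List.mem_cons_self
    obtain ⟨hv, hpw⟩ := List.pairwise_cons.mp hpw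
    have hfv : greedyStep G f v v ≤ c v :=
      greedyStep_self_le G f v hvpos fun z hz => (hvnbr z hz).ne
    refine greedyFrom_le_of_pairwise c l (fun w => ?_) (fun w hw => ?_) hpw
    · by_cases hwv : w = v
      · rwa [hwv]
      · rw [greedyStep_of_ne G f hwv]
        exact hf w
    · obtain ⟨hwpos, hwnbr⟩ := hl w (List.mem_cons_of_mem v hw)
      refine ⟨hwpos, fun u hu => ?_⟩
      by_cases huv : u = v
      · subst huv
        exact hfv.trans_lt (hv w hw hu.symm)
      · rw [greedyStep_of_ne G f huv]
        exact hwnbr u hu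

lemma greedy_le_of_pairwise (c : V → ℕ) {l : List V} (hpos : ∀ v ∈ l, 0 < c v)
    (hl : l.Pairwise (fun a b => G.Adj a b → c a < c b)) (w : V) : greedy G l w ≤ c w :=
  greedyFrom_le_of_pairwise G c l (fun _ => Nat.zero_le _)
    (fun v hv => ⟨hpos v hv, fun _ _ => hpos v hv⟩) hl w

end Greedy

lemma exists_nodup_pairwise_le {V α : Type*} [Fintype V] [LinearOrder α] (c : V → α) :
    ∃ l : List V, l.Nodup ∧ (∀ v, v ∈ l) ∧ l.Pairwise (fun a b => c a ≤ c b) := by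
  let l := Finset.univ.toList.mergeSort (fun a b => decide (c a ≤ c b))
  refine ⟨l, (List.mergeSort_perm _ _).nodup_iff.mpr (Finset.nodup_toList _),
    fun v => List.mem_mergeSort.mpr (Finset.mem_toList.mpr (Finset.mem_univ v)), ?_⟩
  refine (List.pairwise_mergeSort ?_ ?_ _).imp fun h => of_decide_eq_true h
  · intro a b c hab hbc
    simp only [decide_eq_true_eq] at *
    exact hab.trans hbc
  · intro a b
    simpa using le_total (c a) (c b)

section AddUniversal

variable {V : Type*} (G : SimpleGraph V)

lemma addUniversal_adj_some_some {x y : V} :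
    (addUniversal G).Adj (some x) (some y) ↔ G.Adj x y := by
  simp only [addUniversal, fromRel_adj, ne_eq, Option.some.injEq, reduceCtorEq, false_and, or_false,
    exists_and_left, exists_eq_left']
  exact ⟨fun h => h.2.elim id (·.symm), fun h => ⟨G.ne_of_adj h, .inl h⟩⟩

lemma addUniversal_adj_some_none {x : V} : (addUniversal G).Adj (some x) none := by
  simp [addUniversal, SimpleGraph.fromRel_adj]

lemma colorable_pred_of_addUniversal {g : Option V → ℕ} {k : ℕ} (hpos : ∀ w, g w ≠ 0)
    (hle : ∀ w, g w ≤ k) (hg : ∀ a b, (addUniversal G).Adj a b → g a ≠ g b) :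
    G.Colorable (k - 1) := by
  have hapex : ∀ v, g (some v) ≠ g none := fun v => hg _ _ (addUniversal_adj_some_none G)
  have hnone := hpos none
  have hnone' := hle none
  -- remove the apex color and renumber the others from `0`
  let c : V → ℕ := fun v => if g (some v) < g none then g (some v) - 1 else g (some v) - 2
  have hc : ∀ v, c v < k - 1 := fun v => by
    have h₁ := hapex v; have h₂ := hpos (some v); have h₃ := hle (some v)
    simp only [c]
    split_ifs <;> omega
  refine ⟨Coloring.mk (fun v => ⟨c v, hc v⟩) fun {v w} hadj heq => ?_⟩
  have hvw := hg _ _ ((addUniversal_adj_some_some G).mpr hadj)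
  have h₁ := hapex v; have h₂ := hapex w; have h₃ := hpos (some v); have h₄ := hpos (some w)
  simp only [c, Fin.mk.injEq] at heq
  split_ifs at heq <;> omega

variable [DecidableEq V] [Fintype V]

lemma exists_isCGC_addUniversal_le {n : ℕ} (hG : G.Colorable n) :
    ∃ f, IsCGC (addUniversal G) f ∧ ∀ w, f w ≤ n + 1 := by
  obtain ⟨C⟩ := hG
  obtain ⟨L, hnd, hmem, hsorted⟩ := exists_nodup_pairwise_le (fun v => (C v : ℕ))
  let c : Option V → ℕ := fun w => w.elim 1 fun v => C v + 2
  let l := none :: L.map some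
  have hconn : IsConnectedOrder (addUniversal G) l := by
    refine isConnectedOrder_cons_of_forall_adj _ ?_ ?_ ?_
    · exact List.nodup_cons.mpr ⟨by simp, hnd.map (Option.some_injective V)⟩
    · rintro (_ | v) <;> simp [hmem]
    · simp only [List.mem_map]
      rintro _ ⟨v, -, rfl⟩
      exact addUniversal_adj_some_none G
  have hpw : l.Pairwise (fun a b => (addUniversal G).Adj a b → c a < c b) := by
    refine List.pairwise_cons.mpr
      ⟨?_, List.pairwise_map.mpr (hsorted.imp fun {a b} hle hadj => ?_)⟩
    · simp only [List.mem_map]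
      rintro _ ⟨v, -, rfl⟩ -
      simp [c]
    · have hne : (C a : ℕ) ≠ C b :=
        Fin.val_injective.ne (C.valid ((addUniversal_adj_some_some G).mp hadj))
      simp only [c, Option.elim]
      omega
  refine ⟨greedy _ l, ⟨l, hconn, rfl⟩, fun w => ?_⟩
  refine (greedy_le_of_pairwise _ c (by rintro (_ | v) - <;> simp [c]) hpw w).trans ?_
  rcases w with _ | v <;> simp [c]

lemma chromaticNumber_add_one_le_of_greedy_addUniversal {l : List (Option V)}
    (hl : ∀ w, w ∈ l) {k : ℕ} (hk : ∀ w, greedy (addUniversal G) l w ≤ k) :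
    G.chromaticNumber + 1 ≤ k := by
  have hpos : ∀ w, greedy (addUniversal G) l w ≠ 0 :=
    fun w => greedyFrom_ne_zero_of_mem (addUniversal G) _ (hl w)
  have hk1 : 1 ≤ k := Nat.one_le_iff_ne_zero.mpr fun h => hpos none (by simpa [h] using hk none)
  have hcol := colorable_pred_of_addUniversal G hpos hk
    fun a b => greedy_adj_ne _ (hl a) (hl b)
  calc G.chromaticNumber + 1 ≤ ((k - 1 : ℕ) : ℕ∞) + 1 := by
        gcongr; exact hcol.chromaticNumber_le
    _ = k := by rw [← Nat.cast_add_one, Nat.sub_add_cancel hk1]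

end AddUniversal

theorem statement0_general {V : Type*} [Fintype V] [DecidableEq V]
    (G : SimpleGraph V) :
    (connChrom (addUniversal G) : ℕ∞) = G.chromaticNumber + 1 := by
  obtain ⟨n, hn⟩ := ENat.ne_top_iff_exists.mp
    (G.chromaticNumber_le_card.trans_lt (ENat.natCast_lt_top _)).ne
  have hS : n + 1 ∈ {k | ∃ f, IsCGC (addUniversal G) f ∧ ∀ w, f w ≤ k} :=
    exists_isCGC_addUniversal_le G (chromaticNumber_le_iff_colorable.mp hn.ge)
  obtain ⟨_, ⟨l, hl, rfl⟩, hle⟩ := Nat.sInf_mem ⟨_, hS⟩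
  refine le_antisymm ?_ (chromaticNumber_add_one_le_of_greedy_addUniversal G hl.2.1 hle)
  rw [← hn]
  exact_mod_cast Nat.sInf_le hS

theorem statement0 {V : Type*} [Fintype V] [DecidableEq V] [Nonempty V]
    (G : SimpleGraph V) (hG : G.Connected) :
    (connChrom (addUniversal G) : ℕ∞) = G.chromaticNumber + 1 :=
  statement0_general G
end

section
/- Let H be a finite simple graph with χ(H) ≥ 2 and let H* be the double Mycielskian of H. Then χ(H*) = χ(H) + 1. Moreover, if H is triangle-free then H* is triangle-free. -/
open SimpleGraph

/-- The double Mycielskian of `H`: `Sum.inl x` is the original vertex `x`,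
`Sum.inr (Sum.inl (i, x))` is the copy `x_{i}` of `x` in the independent set `V_i`
(for `i : Bool`), and `Sum.inr (Sum.inr i)` is the apex `x_i` dominating `V_i`.
A copy `y_i` is adjacent to an original vertex `z` exactly when `yz` is an edge of `H`,
the two apexes are adjacent, and the apex of side `i` is complete to `V_i`. -/
def doubleMycielskian {W : Type*} (H : SimpleGraph W) :
    SimpleGraph (W ⊕ ((Bool × W) ⊕ Bool)) :=
  SimpleGraph.fromRel (fun a b =>
    (∃ x y, a = Sum.inl x ∧ b = Sum.inl y ∧ H.Adj x y) ∨
    (∃ (i : Bool) (x y : W), a = Sum.inr (Sum.inl (i, x)) ∧ b = Sum.inl y ∧ H.Adj x y) ∨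
    (∃ (i : Bool) (x : W), a = Sum.inr (Sum.inr i) ∧ b = Sum.inr (Sum.inl (i, x))) ∨
    (a = Sum.inr (Sum.inr true) ∧ b = Sum.inr (Sum.inr false)))

section Aux
variable {W : Type*} {H : SimpleGraph W}

lemma dm_inl_inl {x y : W} : (doubleMycielskian H).Adj (Sum.inl x) (Sum.inl y) ↔ H.Adj x y := by
  simp [doubleMycielskian, fromRel_adj]
  exact ⟨fun h => h.2.elim id Adj.symm, fun h => ⟨h.ne, Or.inl h⟩⟩

lemma dm_copy_inl {i : Bool} {x y : W} :
    (doubleMycielskian H).Adj (Sum.inr (Sum.inl (i, x))) (Sum.inl y) ↔ H.Adj x y := by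
  simp [doubleMycielskian, fromRel_adj]
  cases i <;> aesop

lemma dm_inl_copy {i : Bool} {x y : W} :
    (doubleMycielskian H).Adj (Sum.inl y) (Sum.inr (Sum.inl (i, x))) ↔ H.Adj x y := by
  rw [adj_comm]; exact dm_copy_inl

lemma dm_copy_copy {p q : Bool × W} :
    ¬ (doubleMycielskian H).Adj (Sum.inr (Sum.inl p)) (Sum.inr (Sum.inl q)) := by
  simp [doubleMycielskian, fromRel_adj]

lemma dm_apex_copy {i j : Bool} {x : W} :
    (doubleMycielskian H).Adj (Sum.inr (Sum.inr i)) (Sum.inr (Sum.inl (j, x))) ↔ i = j := by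
  simp [doubleMycielskian, fromRel_adj]
  cases i <;> cases j <;> simp

lemma dm_copy_apex {i j : Bool} {x : W} :
    (doubleMycielskian H).Adj (Sum.inr (Sum.inl (j, x))) (Sum.inr (Sum.inr i)) ↔ i = j := by
  rw [adj_comm]; exact dm_apex_copy

lemma dm_apex_inl {i : Bool} {y : W} :
    ¬ (doubleMycielskian H).Adj (Sum.inr (Sum.inr i)) (Sum.inl y) := by
  simp [doubleMycielskian, fromRel_adj]

lemma dm_inl_apex {i : Bool} {y : W} :
    ¬ (doubleMycielskian H).Adj (Sum.inl y) (Sum.inr (Sum.inr i)) := by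
  rw [adj_comm]; exact dm_apex_inl

lemma dm_apex_apex {i j : Bool} :
    (doubleMycielskian H).Adj (Sum.inr (Sum.inr i)) (Sum.inr (Sum.inr j)) ↔ i ≠ j := by
  simp [doubleMycielskian, fromRel_adj]
  cases i <;> cases j <;> simp

lemma dm_colorable {n : ℕ} (hn : 1 ≤ n) (c : H.Coloring (Fin n)) :
    (doubleMycielskian H).Colorable (n + 1) := by
  refine ⟨Coloring.mk (fun a => match a with
    | Sum.inl x => (c x).castSucc
    | Sum.inr (Sum.inl (true, x)) => (c x).castSucc
    | Sum.inr (Sum.inl (false, x)) =>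
        if (c x : ℕ) = 0 then Fin.last n else (c x).castSucc
    | Sum.inr (Sum.inr true) => Fin.last n
    | Sum.inr (Sum.inr false) => (0 : Fin (n + 1))) ?_⟩
  rintro (x | ⟨⟨(_|_), x⟩ | (_|_)⟩) (y | ⟨⟨(_|_), y⟩ | (_|_)⟩) hadj <;>
    simp only [dm_inl_inl, dm_copy_inl, dm_inl_copy, dm_copy_copy, dm_apex_copy, dm_copy_apex,
      dm_apex_inl, dm_inl_apex, dm_apex_apex, ne_eq] at hadj <;>
    first
    | exact absurd hadj (by decide)
    | (have h1 := (c x).isLt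
       have h2 := (c y).isLt
       have h3 : (c x : ℕ) ≠ (c y : ℕ) := by
         first
           | exact fun h => c.valid hadj (Fin.val_injective h)
           | exact fun h => c.valid hadj (Fin.val_injective h.symm)
       simp only [ne_eq, Fin.ext_iff, Fin.coe_castSucc, Fin.val_last, Fin.val_zero, apply_ite Fin.val]
       first | (split_ifs <;> omega) | omega)
    | (have h1 := (c x).isLt
       simp only [ne_eq, Fin.ext_iff, Fin.coe_castSucc, Fin.val_last, Fin.val_zero, apply_ite Fin.val]
       first | (split_ifs <;> omega) | omega)
    | (have h1 := (c y).isLt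
       simp only [ne_eq, Fin.ext_iff, Fin.coe_castSucc, Fin.val_last, Fin.val_zero, apply_ite Fin.val]
       first | (split_ifs <;> omega) | omega)
    | (simp only [ne_eq, Fin.ext_iff, Fin.coe_castSucc, Fin.val_last, Fin.val_zero, apply_ite Fin.val]
       first | (split_ifs <;> omega) | omega)

lemma dm_lower {m : ℕ} (C : (doubleMycielskian H).Coloring (Fin m)) [Fintype W] :
    H.Colorable (m - 1) := by
  have hm : 1 ≤ m := by
    by_contra h
    push_neg at h
    interval_cases m
    exact (C (Sum.inr (Sum.inr true))).elim0
  set a := C (Sum.inr (Sum.inr true)) with ha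
  have hcopy : ∀ x : W, C (Sum.inr (Sum.inl (true, x))) ≠ a := fun x h =>
    C.valid (dm_apex_copy.mpr rfl) h.symm
  let g : W → {k : Fin m // k ≠ a} := fun x =>
    if h : C (Sum.inl x) = a then ⟨C (Sum.inr (Sum.inl (true, x))), hcopy x⟩
    else ⟨C (Sum.inl x), h⟩
  have col : H.Coloring {k : Fin m // k ≠ a} := by
    refine Coloring.mk g ?_
    intro x y hxy
    simp only [g]
    split_ifs with h1 h2
    · exact absurd (h1.trans h2.symm) (C.valid (dm_inl_inl.mpr hxy))
    · simp only [ne_eq, Subtype.mk.injEq]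
      exact C.valid (dm_copy_inl.mpr hxy)
    · simp only [ne_eq, Subtype.mk.injEq]
      exact fun h => (C.valid (dm_copy_inl.mpr hxy.symm)) h.symm
    · simp only [ne_eq, Subtype.mk.injEq]
      exact C.valid (dm_inl_inl.mpr hxy)
  have hcard : Fintype.card {k : Fin m // k ≠ a} = m - 1 := by
    simp [Fintype.card_subtype_compl]
  exact hcard ▸ col.colorable

end Aux

theorem statement8 {W : Type*} [Fintype W] (H : SimpleGraph W)
    (hχ : 2 ≤ H.chromaticNumber) :
    (doubleMycielskian H).chromaticNumber = H.chromaticNumber + 1 ∧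
      (H.CliqueFree 3 → (doubleMycielskian H).CliqueFree 3) := by
  classical
  constructor
  · have hne : H.chromaticNumber ≠ ⊤ := by
      exact ne_top_of_le_ne_top (by simp) H.colorable_of_fintype.chromaticNumber_le
    lift H.chromaticNumber to ℕ using hne with n hn
    have hn2 : 2 ≤ n := by exact_mod_cast hχ
    have hcol : H.Colorable n := chromaticNumber_le_iff_colorable.mp hn.ge
    obtain ⟨c⟩ := hcol
    have upper : (doubleMycielskian H).chromaticNumber ≤ (n : ℕ∞) + 1 := by
      have := (dm_colorable (by omega) c).chromaticNumber_le
      exact_mod_cast this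
    have lower : ¬ (doubleMycielskian H).Colorable n := by
      rintro ⟨C⟩
      have h1 : H.Colorable (n - 1) := dm_lower C
      have h2 := h1.chromaticNumber_le
      rw [← hn] at h2
      have : n ≤ n - 1 := by exact_mod_cast h2
      omega
    have hlt : (n : ℕ∞) < (doubleMycielskian H).chromaticNumber :=
      lt_of_not_ge fun h => lower (chromaticNumber_le_iff_colorable.mp h)
    exact le_antisymm upper (Order.add_one_le_of_lt hlt)
  · intro hH t ht
    have tri : ∀ x y z : W, H.Adj x y → H.Adj x z → H.Adj y z → False := fun x y z h1 h2 h3 =>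
      hH {x, y, z} (is3Clique_triple_iff.2 ⟨h1, h2, h3⟩)
    obtain ⟨u, v, w, huv, huw, hvw, -⟩ := is3Clique_iff.1 ht
    rcases u with x | ⟨⟨i, x⟩ | i⟩ <;> rcases v with y | ⟨⟨j, y⟩ | j⟩ <;>
      rcases w with z | ⟨⟨k, z⟩ | k⟩ <;>
      simp only [dm_inl_inl, dm_copy_inl, dm_inl_copy, dm_copy_copy, dm_apex_copy, dm_copy_apex,
        dm_apex_inl, dm_inl_apex, dm_apex_apex, ne_eq] at huv huw hvw <;>
      first
      | exact tri _ _ _ huv huw hvw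
      | exact tri _ _ _ huv hvw huw
      | exact tri _ _ _ huw hvw huv
      | (exfalso; revert huv huw hvw; revert i j k; decide)
end

section
/- For every integer k ≥ 3, the graph G^3_k(p,q) is triangle-free, satisfies χ(G^3_k(p,q)) = k + 1, and in every proper (k+1)-coloring of G^3_k(p,q), the vertices p and q receive distinct colors. -/
open SimpleGraph

/-- The vertex type of `G^3_k(p,q)`: the result of `n` applications of the double
Mycielskian construction to the four vertices of the path `(p, x, y, q)`. -/
def G3Vert : ℕ → Type
  | 0 => Fin 4
  | n + 1 => G3Vert n ⊕ ((Bool × G3Vert n) ⊕ Bool)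

instance G3Vert.instDecidableEq : ∀ n, DecidableEq (G3Vert n)
  | 0 => inferInstanceAs (DecidableEq (Fin 4))
  | n + 1 =>
    letI := G3Vert.instDecidableEq n
    inferInstanceAs (DecidableEq (G3Vert n ⊕ ((Bool × G3Vert n) ⊕ Bool)))

/-- The graph obtained from the path `(p, x, y, q)` on four vertices by applying the
double Mycielskian operation `n` times. -/
def G3Graph : (n : ℕ) → SimpleGraph (G3Vert n)
  | 0 => SimpleGraph.pathGraph 4
  | n + 1 => doubleMycielskian (G3Graph n)

/-- The canonical copy of an original path vertex inside the iterated double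
Mycielskian. -/
def G3emb : (n : ℕ) → Fin 4 → G3Vert n
  | 0 => id
  | n + 1 => fun i => Sum.inl (G3emb n i)

/-!
Induction on the number of double Mycielskian steps `H ↦ H*`, starting from the path `pxyq`.
A triangle of `H*` cannot use an apex, whose neighbourhood is independent, and sending every copy
`w_i` to `w` maps an apex-free triangle to a triangle of `H`. A colouring of `H` extends to `H*`
with one new colour on `V_true ∪ {x_false}`. Conversely, given a colouring `C` of `H*` and an apex
`x_i`, recolouring every original vertex of colour `C x_i` by the colour of its copy in `V_i`
gives a colouring of `H` that avoids `C x_i` and keeps all other colours. The two apexes get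
different colours, so one of them differs from `C p`; recolouring against it shows that
`C p = C q` would give `H` a colouring with one colour fewer identifying `p` and `q`.
-/

namespace SimpleGraph

open Sum

variable {W : Type*} {H : SimpleGraph W}

@[simp] lemma doubleMycielskian_adj_inl_inl {x y : W} :
    (doubleMycielskian H).Adj (inl x) (inl y) ↔ H.Adj x y := by
  simpa [doubleMycielskian, H.adj_comm y x] using fun h => H.ne_of_adj h

@[simp] lemma doubleMycielskian_adj_inl_copy {i : Bool} {x y : W} :
    (doubleMycielskian H).Adj (inl x) (inr (inl (i, y))) ↔ H.Adj x y := by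
  cases i <;> simp [doubleMycielskian, H.adj_comm y x]

@[simp] lemma doubleMycielskian_adj_copy_inl {i : Bool} {x y : W} :
    (doubleMycielskian H).Adj (inr (inl (i, x))) (inl y) ↔ H.Adj x y := by
  cases i <;> simp [doubleMycielskian]

@[simp] lemma doubleMycielskian_not_adj_copy_copy {a b : Bool × W} :
    ¬ (doubleMycielskian H).Adj (inr (inl a)) (inr (inl b)) := by
  simp [doubleMycielskian]

@[simp] lemma doubleMycielskian_not_adj_inl_apex {x : W} {i : Bool} :
    ¬ (doubleMycielskian H).Adj (inl x) (inr (inr i)) := by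
  simp [doubleMycielskian]

@[simp] lemma doubleMycielskian_not_adj_apex_inl {x : W} {i : Bool} :
    ¬ (doubleMycielskian H).Adj (inr (inr i)) (inl x) := by
  simp [doubleMycielskian]

@[simp] lemma doubleMycielskian_adj_apex_copy {i j : Bool} {x : W} :
    (doubleMycielskian H).Adj (inr (inr i)) (inr (inl (j, x))) ↔ i = j := by
  cases i <;> cases j <;> simp [doubleMycielskian]

@[simp] lemma doubleMycielskian_adj_copy_apex {i j : Bool} {x : W} :
    (doubleMycielskian H).Adj (inr (inl (j, x))) (inr (inr i)) ↔ j = i := by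
  cases i <;> cases j <;> simp [doubleMycielskian]

@[simp] lemma doubleMycielskian_adj_apex_apex {i j : Bool} :
    (doubleMycielskian H).Adj (inr (inr i)) (inr (inr j)) ↔ i ≠ j := by
  cases i <;> cases j <;> simp [doubleMycielskian]

lemma doubleMycielskian_not_adj_of_adj_apex {i : Bool} {u v : W ⊕ ((Bool × W) ⊕ Bool)}
    (hu : (doubleMycielskian H).Adj (inr (inr i)) u)
    (hv : (doubleMycielskian H).Adj (inr (inr i)) v) : ¬ (doubleMycielskian H).Adj u v := by
  rcases u with _ | (⟨j, _⟩ | j) <;> rcases v with _ | (⟨l, _⟩ | l) <;> simp_all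
  all_goals cases i <;> cases j <;> cases l <;> simp_all

lemma doubleMycielskian_adj_base {u v : W ⊕ (Bool × W)}
    (h : (doubleMycielskian H).Adj (u.map id inl) (v.map id inl)) :
    H.Adj (u.elim id Prod.snd) (v.elim id Prod.snd) := by
  rcases u with _ | ⟨_, _⟩ <;> rcases v with _ | ⟨_, _⟩ <;> simp_all

theorem CliqueFree.doubleMycielskian (hH : H.CliqueFree 3) :
    (doubleMycielskian H).CliqueFree 3 := by
  classical
  intro s hs
  obtain ⟨a, b, c, hab, hac, hbc, -⟩ := is3Clique_iff.1 hs
  have apex_or_base (a : W ⊕ ((Bool × W) ⊕ Bool)) :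
      (∃ i, a = inr (inr i)) ∨ ∃ u : W ⊕ (Bool × W), a = u.map id inl := by
    rcases a with x | (p | i)
    exacts [.inr ⟨inl x, rfl⟩, .inr ⟨inr p, rfl⟩, .inl ⟨i, rfl⟩]
  rcases apex_or_base a with ⟨i, rfl⟩ | ⟨u, rfl⟩
  · exact doubleMycielskian_not_adj_of_adj_apex hab hac hbc
  rcases apex_or_base b with ⟨i, rfl⟩ | ⟨v, rfl⟩
  · exact doubleMycielskian_not_adj_of_adj_apex hab.symm hbc hac
  rcases apex_or_base c with ⟨i, rfl⟩ | ⟨w, rfl⟩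
  · exact doubleMycielskian_not_adj_of_adj_apex hac.symm hbc.symm hab
  exact hH _ (is3Clique_triple_iff.2
    ⟨doubleMycielskian_adj_base hab, doubleMycielskian_adj_base hac, doubleMycielskian_adj_base hbc⟩)

def Coloring.toDoubleMycielskian {α : Type*} (f : H.Coloring α) (a : α) :
    (doubleMycielskian H).Coloring (Option α) :=
  Coloring.mk
    (fun
      | inl w | inr (inl (false, w)) => some (f w)
      | inr (inl (true, _)) | inr (inr false) => none
      | inr (inr true) => some a)
    (by
      rintro (_ | (⟨_ | _, _⟩ | _ | _)) (_ | (⟨_ | _, _⟩ | _ | _)) h <;>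
        simp_all [f.valid])

theorem Colorable.doubleMycielskian {n : ℕ} (h : H.Colorable (n + 1)) :
    (doubleMycielskian H).Colorable (n + 2) := by
  simpa using (h.some.toDoubleMycielskian 0).colorable

section Recoloring

variable {β : Type*} [DecidableEq β] (C : (doubleMycielskian H).Coloring β) (i : Bool)

def Coloring.ofDoubleMycielskian : H.Coloring {c // c ≠ C (inr (inr i))} :=
  Coloring.mk
    (fun w => if hw : C (inl w) = C (inr (inr i))
      then ⟨C (inr (inl (i, w))), fun h => C.valid (by simp) h.symm⟩
      else ⟨C (inl w), hw⟩)
    (by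
      intro w z hwz
      have hD : (doubleMycielskian H).Adj (inl w) (inl z) := by simpa
      by_cases hw : C (inl w) = C (inr (inr i)) <;> by_cases hz : C (inl z) = C (inr (inr i)) <;>
        simp only [hw, hz, ↓reduceDIte, ne_eq, Subtype.mk.injEq]
      · exact absurd (hw.trans hz.symm) (C.valid hD)
      · exact C.valid (doubleMycielskian_adj_copy_inl.2 hwz)
      · exact (C.valid (doubleMycielskian_adj_copy_inl.2 hwz.symm)).symm
      · exact C.valid hD)

lemma Coloring.ofDoubleMycielskian_apply_of_ne {w : W} (hw : C (inl w) ≠ C (inr (inr i))) :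
    (C.ofDoubleMycielskian i w : β) = C (inl w) := by
  simp [Coloring.ofDoubleMycielskian, Coloring.mk, hw]

end Recoloring

theorem not_colorable_doubleMycielskian {n : ℕ} (h : ¬ H.Colorable n) :
    ¬ (doubleMycielskian H).Colorable (n + 1) := by
  rintro ⟨C⟩
  apply h
  simpa [Fintype.card_subtype_compl] using (C.ofDoubleMycielskian true).colorable

theorem Coloring.ne_of_doubleMycielskian {n : ℕ} {p q : W}
    (hpq : ∀ C : H.Coloring (Fin n), C p ≠ C q)
    (C : (doubleMycielskian H).Coloring (Fin (n + 1))) :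
    C (inl p) ≠ C (inl q) := by
  intro hC
  obtain ⟨i, hi⟩ : ∃ i, C (inl p) ≠ C (inr (inr i)) := by
    by_contra! h
    exact C.valid (doubleMycielskian_adj_apex_apex.2 (by decide)) ((h true).symm.trans (h false))
  have hcard : Fintype.card {c // c ≠ C (inr (inr i))} = n := by simp [Fintype.card_subtype_compl]
  have hC' : C.ofDoubleMycielskian i p = C.ofDoubleMycielskian i q := by
    ext
    rw [C.ofDoubleMycielskian_apply_of_ne i hi, C.ofDoubleMycielskian_apply_of_ne i (hC ▸ hi), hC]
  exact hpq (H.recolorOfEquiv (Fintype.equivFinOfCardEq hcard) (C.ofDoubleMycielskian i))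
    (congrArg (Fintype.equivFinOfCardEq hcard) hC')

end SimpleGraph

open SimpleGraph

lemma pathGraph_four_coloring_ne (C : (pathGraph 4).Coloring (Fin 2)) : C 0 ≠ C 3 := by
  have alternating : ∀ a b c d : Fin 2, a ≠ b → b ≠ c → c ≠ d → a ≠ d := by decide
  exact alternating (C 0) (C 1) (C 2) (C 3) (C.valid (by simp [pathGraph_adj]))
    (C.valid (by simp [pathGraph_adj])) (C.valid (by simp [pathGraph_adj]))

theorem cliqueFree_G3Graph (n : ℕ) : (G3Graph n).CliqueFree 3 := by
  induction n with
  | zero => exact (pathGraph.bicoloring 4).colorable.cliqueFree (by simp)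
  | succ n ih => exact ih.doubleMycielskian

theorem colorable_G3Graph (n : ℕ) : (G3Graph n).Colorable (n + 2) := by
  induction n with
  | zero =>
    show (pathGraph 4).Colorable 2
    simpa using (pathGraph.bicoloring 4).colorable
  | succ n ih => exact ih.doubleMycielskian

theorem not_colorable_G3Graph (n : ℕ) : ¬ (G3Graph n).Colorable (n + 1) := by
  induction n with
  | zero =>
    rintro ⟨C⟩
    exact C.valid (show (pathGraph 4).Adj 0 1 by simp [pathGraph_adj])
      (Subsingleton.elim (α := Fin 1) _ _)
  | succ n ih => exact not_colorable_doubleMycielskian ih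

theorem G3Graph_coloring_ne (n : ℕ) (C : (G3Graph n).Coloring (Fin (n + 2))) :
    C (G3emb n 0) ≠ C (G3emb n 3) := by
  induction n with
  | zero => exact pathGraph_four_coloring_ne C
  | succ n ih => exact Coloring.ne_of_doubleMycielskian ih C

theorem statement9 (k : ℕ) (hk : 3 ≤ k) :
    (G3Graph (k - 1)).CliqueFree 3 ∧
    (G3Graph (k - 1)).chromaticNumber = (k + 1 : ℕ) ∧
    ∀ C : (G3Graph (k - 1)).Coloring (Fin (k + 1)),
      C (G3emb (k - 1) 0) ≠ C (G3emb (k - 1) 3) := by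
  obtain ⟨n, rfl⟩ : ∃ n, k = n + 1 := ⟨k - 1, by omega⟩
  rw [Nat.add_sub_cancel, Nat.cast_add_one, chromaticNumber_eq_iff_colorable_not_colorable]
  exact ⟨cliqueFree_G3Graph n, ⟨colorable_G3Graph n, not_colorable_G3Graph n⟩, G3Graph_coloring_ne n⟩
end

section
/- Let G be a finite nonempty connected simple graph, let X ⊆ V(G) be a set of vertices such that the induced subgraph G[X] is connected and X is a dominating set of G (every vertex of G not in X has a neighbour in X), and let f be a proper coloring of G using k colors such that the restriction of f to X is a connected greedy coloring of G[X]. Then χ_c(G) ≤ k. -/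
open SimpleGraph

/-!
List `X` first, in a connected order whose greedy coloring of `G[X]` is `f` on `X`; greedy
coloring of `G` along this prefix reproduces `f` on `X`, since the vertices outside `X` are
still uncolored. Then append the vertices outside `X`, each of which has an earlier neighbour
because `X` is dominating, in nondecreasing order of `f`. When such a vertex `w` is colored,
its neighbours in `X` carry their `f`-colors, and each colored neighbour `z` outside `X` carries
a color at most `f z ≤ f w`, with `f z ≠ f w`. So the color `f w` is free at `w`, and greedy
gives `w` a color at most `f w ≤ k`.
-/

open Function

theorem Finset.exists_nodup_pairwise_le_comp {α : Type*} (s : Finset α) (f : α → ℕ) :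
    ∃ l : List α, l.Nodup ∧ (∀ a, a ∈ l ↔ a ∈ s) ∧ l.Pairwise (f · ≤ f ·) := by
  refine ⟨s.toList.mergeSort (fun a b => decide (f a ≤ f b)),
    List.nodup_mergeSort.mpr s.nodup_toList, by simp, ?_⟩
  have := List.pairwise_mergeSort (le := fun a b => decide (f a ≤ f b))
    (fun a b c hab hbc => by simp only [decide_eq_true_eq] at *; omega)
    (fun a b => by simp only [Bool.or_eq_true, decide_eq_true_eq]; omega) s.toList
  exact this.imp fun h => by simpa using h

section

variable {V : Type*}

def HasEarlierNeighbours (G : SimpleGraph V) (l : List V) : Prop :=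
  ∀ i : Fin l.length, 0 < (i : ℕ) →
    ∃ j : Fin l.length, (j : ℕ) < (i : ℕ) ∧ G.Adj (l.get i) (l.get j)

theorem IsConnectedOrder.hasEarlierNeighbours {G : SimpleGraph V} {l : List V}
    (h : IsConnectedOrder G l) : HasEarlierNeighbours G l :=
  h.2.2

theorem HasEarlierNeighbours.map {W : Type*} {G' : SimpleGraph W} {G : SimpleGraph V}
    {l : List W} (h : HasEarlierNeighbours G' l) (φ : G' →g G) :
    HasEarlierNeighbours G (l.map φ) := by
  intro i hi
  obtain ⟨j, hji, hadj⟩ := h ⟨i, by simpa using i.2⟩ hi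
  exact ⟨⟨j, by simp⟩, hji, by simpa using φ.map_adj hadj⟩

theorem HasEarlierNeighbours.append {G : SimpleGraph V} {l₁ l₂ : List V}
    (h₁ : HasEarlierNeighbours G l₁) (h₂ : ∀ w ∈ l₂, ∃ u ∈ l₁, G.Adj w u) :
    HasEarlierNeighbours G (l₁ ++ l₂) := by
  intro i hi
  by_cases hil : (i : ℕ) < l₁.length
  · obtain ⟨j, hji, hadj⟩ := h₁ ⟨i, hil⟩ hi
    refine ⟨⟨j, by simp only [List.length_append]; omega⟩, hji, ?_⟩
    simpa [List.getElem_append_left hil, List.getElem_append_left (hji.trans hil)] using hadj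
  · have hi₂ : (i : ℕ) - l₁.length < l₂.length := by
      have := i.2; simp only [List.length_append] at this; omega
    obtain ⟨u, hu, hadj⟩ := h₂ _ (List.getElem_mem hi₂)
    obtain ⟨j, hj, rfl⟩ := List.getElem_of_mem hu
    refine ⟨⟨j, by simp only [List.length_append]; omega⟩, show j < (i : ℕ) by omega, ?_⟩
    simpa [List.getElem_append_left hj, List.getElem_append_right (not_lt.mp hil)] using hadj

theorem IsConnectedOrder.map_val_append {G : SimpleGraph V} {X : Set V}
    (hXdom : ∀ z : V, z ∉ X → ∃ x ∈ X, G.Adj z x) {lX : List X}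
    (hord : IsConnectedOrder (G.induce X) lX) {rest : List V} (hnd : rest.Nodup)
    (hmem : ∀ v, v ∈ rest ↔ v ∉ X) :
    IsConnectedOrder G (lX.map Subtype.val ++ rest) := by
  refine ⟨?_, fun w => ?_, ?_⟩
  · refine List.nodup_append.mpr ⟨hord.1.map Subtype.val_injective, hnd, ?_⟩
    rintro _ hx v hv rfl
    obtain ⟨x, -, rfl⟩ := List.mem_map.mp hx
    exact (hmem x).mp hv x.2
  · by_cases hw : w ∈ X
    · exact List.mem_append_left _ (List.mem_map.mpr ⟨⟨w, hw⟩, hord.2.1 _, rfl⟩)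
    · exact List.mem_append_right _ ((hmem w).mpr hw)
  · refine (hord.hasEarlierNeighbours.map (Embedding.induce X).toHom).append fun w hw => ?_
    obtain ⟨x, hx, hadj⟩ := hXdom w ((hmem w).mp hw)
    exact ⟨x, List.mem_map.mpr ⟨⟨x, hx⟩, hord.2.1 _, rfl⟩, hadj⟩

section Greedy

variable [DecidableEq V] (G : SimpleGraph V)

theorem greedyStep_apply_self_le {f : V → ℕ} {w : V} {c : ℕ} (hc : 0 < c)
    (hfree : ∀ z, G.Adj w z → f z ≠ c) : greedyStep G f w w ≤ c := by
  rw [greedyStep, update_self]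
  exact Nat.sInf_le ⟨hc, hfree⟩

theorem greedyFrom_append (f₀ : V → ℕ) (l₁ l₂ : List V) :
    greedyFrom G f₀ (l₁ ++ l₂) = greedyFrom G (greedyFrom G f₀ l₁) l₂ :=
  List.foldl_append

theorem greedyStep_extend_val {X : Set V} (g : X → ℕ) (x : X) :
    greedyStep G (extend Subtype.val g 0) x =
      extend Subtype.val (greedyStep (G.induce X) g x) 0 := by
  have hcolors : {n : ℕ | 0 < n ∧ ∀ z, G.Adj x z → extend Subtype.val g 0 z ≠ n} =
      {n : ℕ | 0 < n ∧ ∀ z : X, (G.induce X).Adj x z → g z ≠ n} := by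
    ext n
    refine and_congr_right fun hn => ⟨fun h z hadj => ?_, fun h z hadj => ?_⟩
    · simpa [Subtype.val_injective.extend_apply] using h z hadj
    · by_cases hz : z ∈ X
      · lift z to X using hz
        simpa [Subtype.val_injective.extend_apply] using h z hadj
      · rw [extend_apply' _ _ _ (by simpa using hz)]
        exact hn.ne
  funext v
  by_cases hv : v ∈ X
  · lift v to X using hv
    rw [Subtype.val_injective.extend_apply, greedyStep, greedyStep, hcolors]
    by_cases hvx : v = x
    · subst hvx; simp
    · rw [update_of_ne (Subtype.val_injective.ne hvx), update_of_ne hvx,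
        Subtype.val_injective.extend_apply]
  · have hnot : ¬∃ y : X, (y : V) = v := by simpa using hv
    rw [extend_apply' _ _ _ hnot, greedyStep, update_of_ne (by rintro rfl; exact hv x.2),
      extend_apply' _ _ _ hnot]

theorem greedyFrom_map_val {X : Set V} (g : X → ℕ) (l : List X) :
    greedyFrom G (extend Subtype.val g 0) (l.map Subtype.val) =
      extend Subtype.val (greedyFrom (G.induce X) g l) 0 := by
  induction l generalizing g with
  | nil => rfl
  | cons x l ih =>
    simp only [greedyFrom, List.map_cons, List.foldl_cons] at ih ⊢
    rw [greedyStep_extend_val, ih]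

theorem greedy_map_val {X : Set V} (l : List X) :
    greedy G (l.map Subtype.val) = extend Subtype.val (greedy (G.induce X) l) 0 := by
  have hzero : (fun _ : V => 0) = extend Subtype.val (fun _ : X => 0) 0 := by
    funext v
    by_cases hv : v ∈ X
    · lift v to X using hv
      rw [Subtype.val_injective.extend_apply]
    · rw [extend_apply' _ _ _ (by simpa using hv)]; rfl
  rw [greedy, hzero, greedyFrom_map_val]
  rfl

theorem greedyFrom_le_of_pairwise_s19 {f : V → ℕ} (hproper : ∀ a b, G.Adj a b → f a ≠ f b)
    (hpos : ∀ z, 0 < f z) {rest : List V} (hsorted : rest.Pairwise (f · ≤ f ·))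
    {h : V → ℕ} (hle : ∀ z, h z ≤ f z) (hfree : ∀ u ∈ rest, ∀ z, G.Adj u z → h z ≠ f u) :
    ∀ z, greedyFrom G h rest z ≤ f z := by
  induction rest generalizing h with
  | nil => exact hle
  | cons w rest ih =>
    obtain ⟨hw_le, hsorted⟩ := List.pairwise_cons.mp hsorted
    have hcw : greedyStep G h w w ≤ f w :=
      greedyStep_apply_self_le G (hpos w) (hfree w List.mem_cons_self)
    refine ih hsorted (fun z => ?_) (fun u hu z hadj => ?_)
    · by_cases hz : z = w
      · subst z; exact hcw
      · rw [greedyStep, update_of_ne hz]; exact hle z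
    · by_cases hz : z = w
      · subst z
        exact (hcw.trans_lt ((hw_le u hu).lt_of_ne (hproper u w hadj).symm)).ne
      · rw [greedyStep, update_of_ne hz]
        exact hfree u (List.mem_cons_of_mem _ hu) z hadj

theorem greedyFrom_extend_val_le {X : Set V} {f : V → ℕ}
    (hproper : ∀ a b, G.Adj a b → f a ≠ f b) (hpos : ∀ z, 0 < f z) {rest : List V}
    (hsorted : rest.Pairwise (f · ≤ f ·)) :
    ∀ z, greedyFrom G (extend Subtype.val (fun x : X => f x) 0) rest z ≤ f z := by
  have hzero_out : ∀ z ∉ X, extend Subtype.val (fun x : X => f x) 0 z = 0 :=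
    fun z hz => extend_apply' _ _ _ (by simpa using hz)
  refine greedyFrom_le_of_pairwise_s19 G hproper hpos hsorted (fun z => ?_) fun u hu z hadj => ?_
  · by_cases hz : z ∈ X
    · lift z to X using hz
      rw [Subtype.val_injective.extend_apply]
    · rw [hzero_out z hz]; exact Nat.zero_le _
  · by_cases hz : z ∈ X
    · lift z to X using hz
      rw [Subtype.val_injective.extend_apply]
      exact hproper z u hadj.symm
    · rw [hzero_out z hz]; exact (hpos u).ne

end Greedy

end

theorem statement19_general {V : Type*} [Fintype V] [DecidableEq V]
    (G : SimpleGraph V)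
    (X : Set V)
    (hXdom : ∀ z : V, z ∉ X → ∃ x ∈ X, G.Adj z x)
    (k : ℕ) (f : V → ℕ)
    (hproper : ∀ a b : V, G.Adj a b → f a ≠ f b)
    (hrange : ∀ z : V, f z ∈ Finset.Icc 1 k)
    (hres : IsCGC (G.induce X) (fun w : X => f w)) :
    connChrom G ≤ k := by
  classical
  obtain ⟨lX, hord, hfX⟩ := hres
  obtain ⟨rest, hnd, hmem, hsorted⟩ := Xᶜ.toFinset.exists_nodup_pairwise_le_comp f
  replace hmem : ∀ v, v ∈ rest ↔ v ∉ X := by simpa using hmem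
  have hpos : ∀ z, 0 < f z := fun z => (Finset.mem_Icc.mp (hrange z)).1
  refine Nat.sInf_le ⟨_, ⟨_, hord.map_val_append hXdom hnd hmem, rfl⟩, fun w => ?_⟩
  calc greedy G (lX.map Subtype.val ++ rest) w
      = greedyFrom G (extend Subtype.val (fun x : X => f x) 0) rest w := by
        rw [greedy, greedyFrom_append, ← greedy, greedy_map_val, ← hfX]
    _ ≤ f w := greedyFrom_extend_val_le G hproper hpos hsorted w
    _ ≤ k := (Finset.mem_Icc.mp (hrange w)).2

theorem statement19 {V : Type*} [Fintype V] [DecidableEq V] [Nonempty V]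
    (G : SimpleGraph V) (hG : G.Connected)
    (X : Set V)
    (hXconn : (G.induce X).Connected)
    (hXdom : ∀ z : V, z ∉ X → ∃ x ∈ X, G.Adj z x)
    (k : ℕ) (f : V → ℕ)
    (hproper : ∀ a b : V, G.Adj a b → f a ≠ f b)
    (hrange : ∀ z : V, f z ∈ Finset.Icc 1 k)
    (hsurj : ∀ c ∈ Finset.Icc 1 k, ∃ z : V, f z = c)
    (hres : IsCGC (G.induce X) (fun w : X => f w)) :
    connChrom G ≤ k :=
  statement19_general G X hXdom k f hproper hrange hres
end
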